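/- arXiv:1504.07319 — 5 statements merged into one kernel-verified Lean document; each statement's English description precedes it below -/
import Mathlib

section
/- Let F be a field, N ⊴ G groups, and let S : G → GL(V) be an irreducible representation over F such that V has an irreducible G-invariant FN-submodule W satisfying End_{FN}(W) = F. Let R : N → GL(W) be the representation afforded by W, i.e. R(x) = S(x)|_W for x ∈ N. Then there exist an F-vector space U, a representation S' : G → GL(U ⊗_F W) equivalent to S, and irreducible projective representations X : G → GL(W) and Y : G → GL(U) such that: (a) S'(g) = Y(g) ⊗ X(g) for all g ∈ G; (b) X extends R; (c) Y(x) = 1 for all x ∈ N. -/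
open scoped TensorProduct DirectSum

section Preliminaries

variable (F : Type*) [Field F]

/-- Isomorphism (equivalence) of representations: an `F`-linear equivalence intertwining
the two actions. -/
def RepIso {G : Type*} [Monoid G] {V V' : Type*} [AddCommMonoid V] [Module F V]
    [AddCommMonoid V'] [Module F V'] (ρ : Representation F G V) (τ : Representation F G V') :
    Prop :=
  ∃ e : V ≃ₗ[F] V', ∀ (g : G) (v : V), e (ρ g v) = τ g (e v)

/-- Irreducibility of a representation: the space is nonzero and admits no invariant
subspaces other than `⊥` and `⊤`. -/
def IsIrreducibleRep {G : Type*} [Monoid G] {V : Type*} [AddCommMonoid V] [Module F V]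
    (ρ : Representation F G V) : Prop :=
  Nontrivial V ∧ ∀ p : Submodule F V, (∀ g : G, ∀ v ∈ p, ρ g v ∈ p) → p = ⊥ ∨ p = ⊤

/-- The subrepresentation on an invariant submodule. -/
def subRep {G : Type*} [Monoid G] {V : Type*} [AddCommMonoid V] [Module F V]
    (ρ : Representation F G V) (p : Submodule F V) (hp : ∀ g : G, ∀ v ∈ p, ρ g v ∈ p) :
    Representation F G ↥p where
  toFun g := (ρ g).restrict (fun v hv => hp g v hv)
  map_one' := by ext v; simp [LinearMap.restrict_apply]
  map_mul' g₁ g₂ := by ext v; simp [LinearMap.restrict_apply]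

/-- A representation is completely reducible if the underlying module is the sum of its
irreducible invariant submodules. -/
def IsCompletelyReducibleRep {G : Type*} [Monoid G] {V : Type*} [AddCommMonoid V]
    [Module F V] (ρ : Representation F G V) : Prop :=
  sSup {q : Submodule F V |
    ∃ hq : ∀ g : G, ∀ v ∈ q, ρ g v ∈ q, IsIrreducibleRep F (subRep F ρ q hq)} = ⊤

/-- The homogeneous component determined by `σ`: the sum of all irreducible invariant
submodules whose subrepresentation is isomorphic to `σ`. -/
noncomputable def homComponent {G : Type*} [Monoid G] {V W : Type*} [AddCommMonoid V]
    [Module F V] [AddCommMonoid W] [Module F W] (ρ : Representation F G V)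
    (σ : Representation F G W) : Submodule F V :=
  sSup {q : Submodule F V |
    ∃ hq : ∀ g : G, ∀ v ∈ q, ρ g v ∈ q,
      IsIrreducibleRep F (subRep F ρ q hq) ∧ RepIso F (subRep F ρ q hq) σ}

/-- The set of all homogeneous components of a representation. -/
noncomputable def homComponents {G : Type*} [Monoid G] {V : Type*} [AddCommMonoid V]
    [Module F V] (ρ : Representation F G V) : Set (Submodule F V) :=
  {S | ∃ (q : Submodule F V) (hq : ∀ g : G, ∀ v ∈ q, ρ g v ∈ q),
      IsIrreducibleRep F (subRep F ρ q hq) ∧ S = homComponent F ρ (subRep F ρ q hq)}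

/-- A representation `ρ` lies over `σ` if it admits an invariant submodule whose
subrepresentation is isomorphic to `σ`. -/
def LiesOver {G : Type*} [Monoid G] {V W : Type*} [AddCommMonoid V] [Module F V]
    [AddCommMonoid W] [Module F W] (ρ : Representation F G V) (σ : Representation F G W) :
    Prop :=
  ∃ (q : Submodule F V) (hq : ∀ g : G, ∀ v ∈ q, ρ g v ∈ q),
    RepIso F (subRep F ρ q hq) σ

/-- The stabilizer in `G` of a subspace of a representation space. -/
def stabSubgroup {G : Type*} [Group G] {V : Type*} [AddCommGroup V] [Module F V]
    (ρ : Representation F G V) (S : Submodule F V) : Subgroup G where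
  carrier := {g : G | S.map (ρ g) = S}
  one_mem' := by
    show S.map (ρ 1) = S
    rw [map_one, Module.End.one_eq_id]
    exact Submodule.map_id S
  mul_mem' := by
    intro a b ha hb
    show S.map (ρ (a * b)) = S
    rw [map_mul, Module.End.mul_eq_comp, Submodule.map_comp, hb, ha]
  inv_mem' := by
    intro a ha
    show S.map (ρ a⁻¹) = S
    conv_lhs => rw [← ha]
    rw [← Submodule.map_comp, ← Module.End.mul_eq_comp, ← map_mul, inv_mul_cancel, map_one,
      Module.End.one_eq_id, Submodule.map_id]

theorem stabSubgroup_mapsTo {G : Type*} [Group G] {V : Type*} [AddCommGroup V] [Module F V]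
    (ρ : Representation F G V) (S : Submodule F V) :
    ∀ g : ↥(stabSubgroup F ρ S), ∀ v ∈ S, ρ (g : G) v ∈ S := by
  intro g v hv
  have hg : S.map (ρ (g : G)) = S := g.2
  have := Submodule.mem_map_of_mem (f := ρ (g : G)) hv
  rwa [hg] at this

/-- Outer tensor product of representations of two groups. -/
noncomputable def outerRep {G₁ G₂ : Type*} [Monoid G₁] [Monoid G₂] {V₁ V₂ : Type*}
    [AddCommMonoid V₁] [Module F V₁] [AddCommMonoid V₂] [Module F V₂]
    (ρ₁ : Representation F G₁ V₁) (ρ₂ : Representation F G₂ V₂) :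
    Representation F (G₁ × G₂) (V₁ ⊗[F] V₂) :=
  Representation.tprod (ρ₁.comp (MonoidHom.fst G₁ G₂)) (ρ₂.comp (MonoidHom.snd G₁ G₂))

/-- A projective representation with factor set `α`. -/
def IsProjRep {G : Type*} [Group G] {W : Type*} [AddCommGroup W] [Module F W]
    (X : G → (W →ₗ[F] W)) (α : G → G → Fˣ) : Prop :=
  (∀ g : G, Function.Bijective (X g)) ∧
    ∀ g₁ g₂ : G, (X g₁) ∘ₗ (X g₂) = ((α g₁ g₂ : F)) • X (g₁ * g₂)

/-- Irreducibility of a projective representation: no proper nonzero invariant subspace. -/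
def IsProjIrred {G : Type*} [Group G] {W : Type*} [AddCommGroup W] [Module F W]
    (X : G → (W →ₗ[F] W)) : Prop :=
  Nontrivial W ∧ ∀ p : Submodule F W, (∀ g : G, ∀ w ∈ p, X g w ∈ p) → p = ⊥ ∨ p = ⊤

/-- `D` is a system of representatives for the `(H₁,H₂)`-double cosets in `G`. -/
def IsDCosetReps {G : Type*} [Group G] (H₁ H₂ : Subgroup G) (D : Set G) : Prop :=
  ∀ g : G, ∃! d : G, d ∈ D ∧ ∃ h₁ ∈ H₁, ∃ h₂ ∈ H₂, g = h₁ * d * h₂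

end Preliminaries

section Induction

variable (F : Type*) [Field F] {G : Type*} [Group G] (H : Subgroup G)
variable {W : Type*} [AddCommGroup W] [Module F W] (σ : Representation F ↥H W)

/-- The submodule of relations defining the induced module `FG ⊗_{FH} W` as a quotient
of `FG ⊗_F W`. -/
noncomputable def indRel : Submodule (MonoidAlgebra F G) (MonoidAlgebra F G ⊗[F] W) :=
  Submodule.span (MonoidAlgebra F G)
    {z | ∃ (x : H) (w : W),
      z = (MonoidAlgebra.single (x : G) (1 : F)) ⊗ₜ[F] w
            - (1 : MonoidAlgebra F G) ⊗ₜ[F] (σ x w)}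

/-- The underlying space of the induced module `ind_H^G W = FG ⊗_{FH} W`. -/
noncomputable def IndCar := (MonoidAlgebra F G ⊗[F] W) ⧸ indRel F H σ

noncomputable instance : AddCommGroup (IndCar F H σ) :=
  inferInstanceAs (AddCommGroup ((MonoidAlgebra F G ⊗[F] W) ⧸ indRel F H σ))

noncomputable instance : Module (MonoidAlgebra F G) (IndCar F H σ) :=
  inferInstanceAs (Module (MonoidAlgebra F G) ((MonoidAlgebra F G ⊗[F] W) ⧸ indRel F H σ))

noncomputable instance : Module F (IndCar F H σ) :=
  inferInstanceAs (Module F ((MonoidAlgebra F G ⊗[F] W) ⧸ indRel F H σ))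

noncomputable instance : IsScalarTower F (MonoidAlgebra F G) (IndCar F H σ) :=
  inferInstanceAs (IsScalarTower F (MonoidAlgebra F G)
    ((MonoidAlgebra F G ⊗[F] W) ⧸ indRel F H σ))

/-- The induced representation of `G` on `ind_H^G W = FG ⊗_{FH} W`. -/
noncomputable def IndRep : Representation F G (IndCar F H σ) where
  toFun g :=
    { toFun := fun v => (MonoidAlgebra.single g (1 : F) : MonoidAlgebra F G) • v
      map_add' := fun a b => smul_add _ a b
      map_smul' := fun c v => smul_comm _ c v }
  map_one' := by
    ext v
    show MonoidAlgebra.single (1 : G) (1 : F) • v = v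
    rw [← MonoidAlgebra.one_def, one_smul]
  map_mul' g₁ g₂ := by
    ext v
    show MonoidAlgebra.single (g₁ * g₂) (1 : F) • v = _
    rw [show (MonoidAlgebra.single (g₁ * g₂) (1 : F) : MonoidAlgebra F G)
          = MonoidAlgebra.single g₁ 1 * MonoidAlgebra.single g₂ 1 by
        rw [MonoidAlgebra.single_mul_single, one_mul], mul_smul]
    rfl

end Induction

section DirectSums

variable (F : Type*) [Field F] {G : Type*} [Monoid G]

/-- The direct sum of a family of representations. -/
noncomputable def dsumRep {ι : Type*} {V : ι → Type*} [∀ i, AddCommGroup (V i)]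
    [∀ i, Module F (V i)] (ρ : ∀ i, Representation F G (V i)) :
    Representation F G (⨁ i, V i) where
  toFun g := DFinsupp.mapRange.linearMap (fun i => ρ i g)
  map_one' := by
    simp only [map_one]
    exact DFinsupp.mapRange.linearMap_id
  map_mul' g₁ g₂ := by
    simp only [map_mul, Module.End.mul_eq_comp]
    exact DFinsupp.mapRange.linearMap_comp (fun i => ρ i g₁) (fun i => ρ i g₂)

end DirectSums

section Conjugation

variable {G : Type*} [Group G]

/-- Conjugation `x ↦ g x g⁻¹` as a monoid homomorphism of a normal subgroup. -/
def conjHom {N : Subgroup G} (hN : N.Normal) (g : G) : ↥N →* ↥N where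
  toFun x := ⟨g * (x : G) * g⁻¹, hN.conj_mem x.1 x.2 g⟩
  map_one' := by ext; simp
  map_mul' x y := by ext; simp [mul_assoc]

/-- The conjugate subgroup `xHx⁻¹`. -/
def conjSubgroup (x : G) (H : Subgroup G) : Subgroup G :=
  H.map (MulAut.conj x).toMonoidHom

/-- Conjugating back: the homomorphism `K → H`, `k ↦ x⁻¹ k x`, for `K ≤ xHx⁻¹`. -/
def unconjHom (x : G) (H : Subgroup G) {K : Subgroup G} (hK : K ≤ conjSubgroup x H) :
    ↥K →* ↥H where
  toFun k := ⟨x⁻¹ * (k : G) * x, by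
    obtain ⟨h, hh, e⟩ := hK k.2
    have : x⁻¹ * (k : G) * x = h := by
      rw [← e]; simp [MulAut.conj_apply, mul_assoc]
    rw [this]; exact hh⟩
  map_one' := by ext; simp
  map_mul' a b := by
    ext
    show x⁻¹ * (↑a * ↑b) * x = (x⁻¹ * ↑a * x) * (x⁻¹ * ↑b * x)
    group

/-- The homomorphism `K ∩ xHx⁻¹ → H` (with the source regarded as a subgroup of `K`),
given by `k ↦ x⁻¹ k x`. -/
def mackeyHom (x : G) (H K : Subgroup G) :
    ↥((K ⊓ conjSubgroup x H).subgroupOf K) →* ↥H where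
  toFun l := ⟨x⁻¹ * ((l : ↥K) : G) * x, by
    have h2 : ((l : ↥K) : G) ∈ K ⊓ conjSubgroup x H := l.2
    obtain ⟨h, hh, e⟩ := h2.2
    have : x⁻¹ * ((l : ↥K) : G) * x = h := by
      rw [← e]; simp [MulAut.conj_apply, mul_assoc]
    rw [this]; exact hh⟩
  map_one' := by ext; simp
  map_mul' a b := by
    ext
    show x⁻¹ * (↑↑a * ↑↑b) * x = (x⁻¹ * ↑↑a * x) * (x⁻¹ * ↑↑b * x)
    group

end Conjugation


/-!
Let `U = Hom_N(W, V)` be the space of `N`-intertwiners. Because `W` is irreducible with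
`End_N(W) = F`, evaluation `U ⊗ W → V` is injective: in a shortest relation
`∑ uᵢ(wᵢ) = 0` the set of possible first entries `w₀` is `N`-invariant, hence all of `W`, and the
remaining entries then depend on `w₀` through `N`-endomorphisms of `W`, i.e. scalars, which
turns the relation into a linear dependence among the `uᵢ`. The `G`-invariance of `W` gives
automorphisms `X(g)` of `W` with `X(g) R(x) = R(gxg⁻¹) X(g)`, taken to be `R(g)` on `N`; by
Schur's lemma they compose up to scalars. Then `Y(g) f = S(g) ∘ f ∘ X(g)⁻¹` is a projective action
on `U`, trivial on `N`, and evaluation intertwines `Y(g) ⊗ X(g)` with `S(g)`, so by irreducibility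
of `S` evaluation is an isomorphism. For a `Y`-invariant subspace `Q ≠ 0` of `U` the image of
`Q ⊗ W` is `S`-invariant, hence everything, which forces `Q = U`.
-/

section Evaluation

open Representation

variable {F : Type*} [Field F] {H : Type*} [Monoid H]
variable {W : Type*} [AddCommGroup W] [Module F W] {V : Type*} [AddCommGroup V] [Module F V]
variable {σ : Representation F H W} {τ : Representation F H V}

def HasScalarEndomorphisms (σ : Representation F H W) : Prop :=
  ∀ f : W →ₗ[F] W, (∀ (x : H) (w : W), f (σ x w) = σ x (f w)) → ∃ c : F, ∀ w : W, f w = c • w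

def sumEval {ι : Type*} [Fintype ι] (u : ι → IntertwiningMap σ τ) : (ι → W) →ₗ[F] V :=
  ∑ i, (u i).toLinearMap ∘ₗ LinearMap.proj i

@[simp]
lemma sumEval_apply {ι : Type*} [Fintype ι] (u : ι → IntertwiningMap σ τ) (d : ι → W) :
    sumEval u d = ∑ i, u i (d i) := by
  simp [sumEval]

lemma map_sumEval {ι : Type*} [Fintype ι] (u : ι → IntertwiningMap σ τ) (x : H) (d : ι → W) :
    τ x (sumEval u d) = sumEval u (fun i => σ x (d i)) := by
  simp [IntertwiningMap.isIntertwining]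

lemma mem_span_of_range_le_range_sumEval (hσ : HasScalarEndomorphisms σ) {ι : Type*} [Fintype ι]
    {u : ι → IntertwiningMap σ τ} (hu : Function.Injective (sumEval u)) (f : IntertwiningMap σ τ)
    (hf : LinearMap.range f.toLinearMap ≤ LinearMap.range (sumEval u)) :
    f ∈ Submodule.span F (Set.range u) := by
  let φ : W →ₗ[F] (ι → W) := (LinearEquiv.ofInjective _ hu).symm.toLinearMap ∘ₗ
    LinearMap.codRestrict _ f.toLinearMap (fun w => hf ⟨w, rfl⟩)
  have hφ (w : W) : sumEval u (φ w) = f w :=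
    congrArg Subtype.val ((LinearEquiv.ofInjective _ hu).apply_symm_apply _)
  have hφσ (x : H) (w : W) : φ (σ x w) = fun i => σ x (φ w i) :=
    hu (by rw [hφ, ← map_sumEval, hφ, IntertwiningMap.isIntertwining])
  choose c hc using fun i => hσ (LinearMap.proj i ∘ₗ φ) fun x w => congrFun (hφσ x w) i
  refine (Submodule.mem_span_range_iff_exists_fun F).mpr ⟨c, ?_⟩
  ext w
  rw [IntertwiningMap.toLinearMap_apply, IntertwiningMap.toLinearMap_apply, ← hφ w,
    sumEval_apply, IntertwiningMap.sum_apply]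
  refine Finset.sum_congr rfl fun i _ => ?_
  rw [IntertwiningMap.smul_apply, ← map_smul, ← hc i w]
  rfl

lemma injective_sumEval (hirr : IsIrreducibleRep F σ) (hσ : HasScalarEndomorphisms σ) :
    ∀ {n : ℕ} {u : Fin n → IntertwiningMap σ τ}, LinearIndependent F u →
      Function.Injective (sumEval u)
  | 0, _, _ => fun _ _ _ => Subsingleton.elim _ _
  | n + 1, u, hu => by
    obtain ⟨htail, hu0⟩ := linearIndependent_finSucc.mp hu
    have ih := injective_sumEval hirr hσ htail
    let Z := (LinearMap.range (sumEval (Fin.tail u))).comap (u 0).toLinearMap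
    have hZ : ∀ (x : H), ∀ w ∈ Z, σ x w ∈ Z := by
      rintro x w ⟨d, hd⟩
      refine ⟨fun i => σ x (d i), ?_⟩
      rw [← map_sumEval, hd, IntertwiningMap.toLinearMap_apply,
        IntertwiningMap.toLinearMap_apply, IntertwiningMap.isIntertwining]
    rcases hirr.2 Z hZ with hbot | htop
    · rw [injective_iff_map_eq_zero]
      intro d hd
      rw [sumEval_apply, Fin.sum_univ_succ] at hd
      have hd0 : d 0 ∈ Z := ⟨-Fin.tail d, by
        rw [map_neg, sumEval_apply]
        exact neg_eq_of_add_eq_zero_left hd⟩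
      rw [hbot, Submodule.mem_bot] at hd0
      have htail : Fin.tail d = 0 := ih <| by
        rw [map_zero, sumEval_apply]
        simpa [Fin.tail, hd0] using hd
      rw [← Fin.cons_self_tail d, hd0, htail, ← Matrix.vecCons, Matrix.cons_zero_zero]
    · exact absurd (mem_span_of_range_le_range_sumEval hσ ih (u 0)
        (LinearMap.range_le_iff_comap.mpr htop)) hu0

variable (σ τ) in
def tensorEval : IntertwiningMap σ τ ⊗[F] W →ₗ[F] V :=
  TensorProduct.lift (IntertwiningMap.toLinearMapl σ τ)

@[simp]
lemma tensorEval_tmul (f : IntertwiningMap σ τ) (w : W) : tensorEval σ τ (f ⊗ₜ w) = f w :=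
  rfl

lemma tensorEval_injective (hirr : IsIrreducibleRep F σ) (hσ : HasScalarEndomorphisms σ) :
    Function.Injective (tensorEval σ τ) := by
  classical
  let b := Module.Basis.ofVectorSpace F (IntertwiningMap σ τ)
  rw [injective_iff_map_eq_zero]
  intro t ht
  let c := TensorProduct.equivFinsuppOfBasisLeft b t
  let e := c.support.equivFin.symm
  have hc : (fun k => c (e k)) = 0 := by
    refine injective_sumEval hirr hσ (u := fun k => b (e k))
      (b.linearIndependent.comp _ (Subtype.val_injective.comp e.injective)) ?_
    rw [map_zero, sumEval_apply, Equiv.sum_comp e (fun i => b i (c i)),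
      Finset.sum_coe_sort c.support (fun i => b i (c i)), ← ht,
      ← (TensorProduct.equivFinsuppOfBasisLeft b).symm_apply_apply t,
      TensorProduct.equivFinsuppOfBasisLeft_symm_apply]
    simp only [Finsupp.sum, map_sum, tensorEval_tmul]
    rfl
  have : c = 0 := by
    rw [← Finsupp.support_eq_empty, Finset.eq_empty_iff_forall_notMem]
    intro i hi
    exact Finsupp.mem_support_iff.mp hi (by simpa using congrFun hc (e.symm ⟨i, hi⟩))
  simpa [c] using this

end Evaluation

section ProjectiveRepresentations

variable {F : Type*} [Field F] {G : Type*} [Group G]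
variable {W : Type*} [AddCommGroup W] [Module F W]

lemma isProjRep_of_comp_eq_smul (X : G → W →ₗ[F] W) (α : G → G → Fˣ)
    (h1 : X 1 = LinearMap.id) (hmul : ∀ g₁ g₂, X g₁ ∘ₗ X g₂ = (α g₁ g₂ : F) • X (g₁ * g₂)) :
    IsProjRep F X α := by
  refine ⟨fun g => ⟨fun v v' h => ?_, fun v => ⟨((α g g⁻¹)⁻¹ : Fˣ) • X g⁻¹ v, ?_⟩⟩, hmul⟩
  · have h' := congrArg (X g⁻¹) h
    simpa [← LinearMap.comp_apply, hmul, h1] using h'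
  · simp [← LinearMap.comp_apply, hmul, h1, Units.smul_def, smul_smul]

lemma IsIrreducibleRep.isProjIrred_of_extends {N : Subgroup G} {σ : Representation F N W}
    (hσ : IsIrreducibleRep F σ) (X : G → W →ₗ[F] W) (hX : ∀ n : N, X n = σ n) :
    IsProjIrred F X :=
  ⟨hσ.1, fun q hq => hσ.2 q fun n w hw => hX n ▸ hq n w hw⟩

lemma IsProjRep.symm_apply_symm_apply {E : G → W ≃ₗ[F] W} {α : G → G → Fˣ}
    (hα : IsProjRep F (fun g => (E g).toLinearMap) α) (g₁ g₂ : G) (w : W) :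
    (E g₂).symm ((E g₁).symm w) = ((α g₁ g₂)⁻¹ : Fˣ) • (E (g₁ * g₂)).symm w := by
  rw [LinearEquiv.symm_apply_eq, LinearEquiv.symm_apply_eq, Units.smul_def, map_smul, map_smul]
  have := LinearMap.congr_fun (hα.2 g₁ g₂) ((E (g₁ * g₂)).symm w)
  simp only [LinearMap.comp_apply, LinearEquiv.coe_coe, LinearMap.smul_apply,
    LinearEquiv.apply_symm_apply] at this
  rw [this, smul_smul, Units.inv_mul, one_smul]

end ProjectiveRepresentations

section Representations

variable {F : Type*} [Field F] {G : Type*} [Monoid G]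
variable {V : Type*} [AddCommGroup V] [Module F V] {M : Type*} [AddCommMonoid M] [Module F M]

lemma IsIrreducibleRep.surjective_of_comp_eq {ρ : Representation F G V}
    (hρ : IsIrreducibleRep F ρ) (φ : M →ₗ[F] V) (A : G → M →ₗ[F] M)
    (hφ : ∀ g, φ ∘ₗ A g = ρ g ∘ₗ φ) (h0 : φ ≠ 0) : Function.Surjective φ := by
  refine (hρ.2 (LinearMap.range φ) ?_).resolve_left (mt LinearMap.range_eq_bot.mp h0) |>
    LinearMap.range_eq_top.mp
  rintro g _ ⟨m, rfl⟩
  exact ⟨A g m, LinearMap.congr_fun (hφ g) m⟩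

lemma exists_repIso_of_linearEquiv (ρ : Representation F G V) (e : M ≃ₗ[F] V)
    (A : G → M →ₗ[F] M) (he : ∀ g, e.toLinearMap ∘ₗ A g = ρ g ∘ₗ e.toLinearMap) :
    ∃ ρ' : Representation F G M, RepIso F ρ ρ' ∧ ∀ g, ρ' g = A g := by
  have hA (g : G) : A g = e.symm.conjAlgEquiv F (ρ g) := by
    rw [LinearEquiv.conjAlgEquiv_apply, LinearEquiv.symm_symm, ← he, ← LinearMap.comp_assoc,
      LinearEquiv.symm_comp, LinearMap.id_comp]
  refine ⟨(e.symm.conjAlgEquiv F : Module.End F V →* Module.End F M).comp ρ,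
    ⟨e.symm, fun g v => ?_⟩, fun g => (hA g).symm⟩
  simp [LinearEquiv.conjAlgEquiv_apply]

def subRepInclusion (ρ : Representation F G V) (p : Submodule F V)
    (hp : ∀ g : G, ∀ v ∈ p, ρ g v ∈ p) : Representation.IntertwiningMap (subRep F ρ p hp) ρ :=
  ⟨p.subtype, fun _ => rfl⟩

lemma nontrivial_intertwiningMap_subRep (ρ : Representation F G V) (p : Submodule F V)
    (hp : ∀ g : G, ∀ v ∈ p, ρ g v ∈ p) [Nontrivial p] :
    Nontrivial (Representation.IntertwiningMap (subRep F ρ p hp) ρ) := by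
  obtain ⟨w, hw⟩ := exists_ne (0 : p)
  exact ⟨subRepInclusion ρ p hp, 0, fun h => hw (Subtype.ext (DFunLike.congr_fun h w))⟩

end Representations

section ConjugateIntertwining

variable {F : Type*} [Field F] {G : Type*} [Group G] {N : Subgroup G} (hN : N.Normal)
variable {W : Type*} [AddCommGroup W] [Module F W]

@[simp]
lemma coe_conjHom (g : G) (x : N) : (conjHom hN g x : G) = g * x * g⁻¹ :=
  rfl

lemma conjHom_conjHom (g₁ g₂ : G) (x : N) :
    conjHom hN g₁ (conjHom hN g₂ x) = conjHom hN (g₁ * g₂) x := by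
  ext
  simp [mul_assoc]

lemma conjHom_conjHom_inv (g : G) (x : N) : conjHom hN g (conjHom hN g⁻¹ x) = x := by
  ext
  simp [mul_assoc]

@[simp]
lemma conjHom_one (x : N) : conjHom hN 1 x = x := by
  ext
  simp

def IsConjIntertwining (σ : Representation F N W) (E : G → W ≃ₗ[F] W) : Prop :=
  ∀ (g : G) (x : N) (w : W), E g (σ x w) = σ (conjHom hN g x) (E g w)

variable {hN}

lemma IsConjIntertwining.symm_apply {σ : Representation F N W} {E : G → W ≃ₗ[F] W}
    (hE : IsConjIntertwining hN σ E) (g : G) (x : N) (w : W) :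
    (E g).symm (σ x w) = σ (conjHom hN g⁻¹ x) ((E g).symm w) := by
  rw [LinearEquiv.symm_apply_eq, hE, conjHom_conjHom_inv, LinearEquiv.apply_symm_apply]

lemma exists_isConjIntertwining (σ : Representation F N W)
    (hinv : ∀ g : G, RepIso F (σ.comp (conjHom hN g)) σ) :
    ∃ E : G → W ≃ₗ[F] W, IsConjIntertwining hN σ E ∧ ∀ n : N, (E n).toLinearMap = σ n := by
  classical
  choose e he using hinv
  refine ⟨fun g => if hg : g ∈ N then LinearEquiv.ofBijective _ (σ.apply_bijective ⟨g, hg⟩)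
    else (e g).symm, fun g x w => ?_, fun n => by simp only [dif_pos n.2]; rfl⟩
  by_cases hg : g ∈ N
  · simp only [hg, dif_pos, LinearEquiv.ofBijective_apply, ← Module.End.mul_apply, ← map_mul]
    congr 2
    ext
    simp
  · simp only [hg, dif_neg, not_false_eq_true]
    rw [LinearEquiv.symm_apply_eq]
    simpa using (he g x ((e g).symm w)).symm

lemma IsConjIntertwining.exists_isProjRep {σ : Representation F N W} {E : G → W ≃ₗ[F] W}
    (hE : IsConjIntertwining hN σ E) (hσ : HasScalarEndomorphisms σ) [Nontrivial W] :
    ∃ α : G → G → Fˣ, IsProjRep F (fun g => (E g).toLinearMap) α := by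
  have hfactor (g₁ g₂ : G) : ∃ c : Fˣ, ∀ w, E g₁ (E g₂ w) = (c : F) • E (g₁ * g₂) w := by
    let T : W →ₗ[F] W :=
      (E (g₁ * g₂)).symm.toLinearMap ∘ₗ (E g₁).toLinearMap ∘ₗ (E g₂).toLinearMap
    obtain ⟨c, hc⟩ := hσ T fun x w => by
      simp [T, hE _ x, hE _ (conjHom hN g₂ x), hE.symm_apply, conjHom_conjHom]
    have hc0 : c ≠ 0 := by
      obtain ⟨w, hw⟩ := exists_ne (0 : W)
      rintro rfl
      exact hw (by simpa [T] using hc w)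
    refine ⟨Units.mk0 c hc0, fun w => ?_⟩
    rw [Units.val_mk0, ← map_smul, ← hc]
    simp [T]
  choose α hα using hfactor
  exact ⟨α, fun g => (E g).bijective, fun g₁ g₂ => LinearMap.ext (hα g₁ g₂)⟩

end ConjugateIntertwining

section IntertwinerAction

open Representation

variable {F : Type*} [Field F] {G : Type*} [Group G] {N : Subgroup G} {hN : N.Normal}
variable {W : Type*} [AddCommGroup W] [Module F W] {V : Type*} [AddCommGroup V] [Module F V]
variable (ρ : Representation F G V) {σ : Representation F N W} {E : G → W ≃ₗ[F] W}

def intertwinerAction (hE : IsConjIntertwining hN σ E) (g : G) :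
    IntertwiningMap σ (ρ.comp N.subtype) →ₗ[F] IntertwiningMap σ (ρ.comp N.subtype) where
  toFun f := ⟨ρ g ∘ₗ f.toLinearMap ∘ₗ (E g).symm.toLinearMap, fun x => LinearMap.ext fun w => by
    change ρ g (f ((E g).symm (σ x w))) = ρ x (ρ g (f ((E g).symm w)))
    rw [hE.symm_apply, f.isIntertwining, MonoidHom.comp_apply, ← Module.End.mul_apply,
      ← map_mul, ← Module.End.mul_apply, ← map_mul]
    congr 2
    simp [mul_assoc]⟩
  map_add' f f' := by
    ext
    simp
  map_smul' c f := by
    ext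
    simp

variable {ρ}

lemma intertwinerAction_apply (hE : IsConjIntertwining hN σ E) (g : G)
    (f : IntertwiningMap σ (ρ.comp N.subtype)) (w : W) :
    intertwinerAction ρ hE g f w = ρ g (f ((E g).symm w)) :=
  rfl

lemma intertwinerAction_of_mem (hE : IsConjIntertwining hN σ E)
    (hEN : ∀ n : N, (E n).toLinearMap = σ n) (n : N) : intertwinerAction ρ hE n = LinearMap.id := by
  ext f w
  have hw : σ n ((E n).symm w) = w := by
    rw [← hEN n, LinearEquiv.coe_coe, LinearEquiv.apply_symm_apply]
  rw [IntertwiningMap.toLinearMap_apply, IntertwiningMap.toLinearMap_apply, intertwinerAction_apply,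
    LinearMap.id_apply]
  conv_rhs => rw [← hw, f.isIntertwining]
  rfl

lemma intertwinerAction_comp (hE : IsConjIntertwining hN σ E) {α : G → G → Fˣ}
    (hα : IsProjRep F (fun g => (E g).toLinearMap) α) (g₁ g₂ : G) :
    intertwinerAction ρ hE g₁ ∘ₗ intertwinerAction ρ hE g₂ =
      ((α g₁ g₂)⁻¹ : Fˣ) • intertwinerAction ρ hE (g₁ * g₂) := by
  ext f w
  simp [intertwinerAction_apply, hα.symm_apply_symm_apply, Units.smul_def]

lemma isProjRep_intertwinerAction (hE : IsConjIntertwining hN σ E)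
    (hEN : ∀ n : N, (E n).toLinearMap = σ n) {α : G → G → Fˣ}
    (hα : IsProjRep F (fun g => (E g).toLinearMap) α) :
    IsProjRep F (intertwinerAction ρ hE) fun g₁ g₂ => (α g₁ g₂)⁻¹ :=
  isProjRep_of_comp_eq_smul _ _ (by simpa using intertwinerAction_of_mem hE hEN 1)
    (intertwinerAction_comp hE hα)

lemma tensorEval_comp_map_intertwinerAction (hE : IsConjIntertwining hN σ E) (g : G) :
    tensorEval σ (ρ.comp N.subtype) ∘ₗ
        TensorProduct.map (intertwinerAction ρ hE g) (E g).toLinearMap =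
      ρ g ∘ₗ tensorEval σ (ρ.comp N.subtype) := by
  ext f w
  simp [intertwinerAction_apply]

end IntertwinerAction

section Clifford

open Representation

variable {F : Type*} [Field F] {G : Type*} [Group G] {N : Subgroup G} {hN : N.Normal}
variable {W : Type*} [AddCommGroup W] [Module F W] {V : Type*} [AddCommGroup V] [Module F V]
variable {ρ : Representation F G V} {σ : Representation F N W} {E : G → W ≃ₗ[F] W}

lemma tensorEval_surjective (hρ : IsIrreducibleRep F ρ) (hE : IsConjIntertwining hN σ E)
    [Nontrivial (IntertwiningMap σ (ρ.comp N.subtype))] :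
    Function.Surjective (tensorEval σ (ρ.comp N.subtype)) := by
  obtain ⟨f, hf⟩ := exists_ne (0 : IntertwiningMap σ (ρ.comp N.subtype))
  obtain ⟨w, hw⟩ := DFunLike.ne_iff.mp hf
  exact hρ.surjective_of_comp_eq _ _ (tensorEval_comp_map_intertwinerAction hE)
    fun h => hw (by simpa using LinearMap.congr_fun h (f ⊗ₜ w))

lemma isProjIrred_intertwinerAction (hρ : IsIrreducibleRep F ρ) (hσirr : IsIrreducibleRep F σ)
    (hσ : HasScalarEndomorphisms σ) (hE : IsConjIntertwining hN σ E)
    [Nontrivial (IntertwiningMap σ (ρ.comp N.subtype))] :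
    IsProjIrred F (intertwinerAction ρ hE) := by
  refine ⟨inferInstance, fun q hq => or_iff_not_imp_left.mpr fun hq0 => ?_⟩
  have := hσirr.1
  obtain ⟨f, hfq, hf⟩ := Submodule.exists_mem_ne_zero_of_ne_bot hq0
  obtain ⟨w, hw⟩ := DFunLike.ne_iff.mp hf
  let φ := tensorEval σ (ρ.comp N.subtype) ∘ₗ q.subtype.rTensor W
  have hφ : Function.Surjective φ := by
    refine hρ.surjective_of_comp_eq φ
      (fun g => TensorProduct.map ((intertwinerAction ρ hE g).restrict (hq g)) (E g).toLinearMap)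
      (fun g => ?_) fun h => hw (by simpa [φ] using LinearMap.congr_fun h (⟨f, hfq⟩ ⊗ₜ w))
    refine TensorProduct.ext' fun f w => ?_
    simpa [φ] using LinearMap.congr_fun (tensorEval_comp_map_intertwinerAction hE g) (f.1 ⊗ₜ w)
  have hr : Function.Surjective (q.subtype.rTensor W) := fun t => by
    obtain ⟨s, hs⟩ := hφ (tensorEval σ (ρ.comp N.subtype) t)
    exact ⟨s, tensorEval_injective hσirr hσ hs⟩
  rw [← LinearMap.lTensor_surj_iff_rTensor_surj,
    Module.FaithfullyFlat.lTensor_surjective_iff_surjective] at hr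
  rw [← q.range_subtype]
  exact LinearMap.range_eq_top.mpr hr

end Clifford

universe v

/-- Theorem 3.7 (Clifford): let `N ⊴ G` and let `S : G → GL(V)` be an irreducible
representation such that `V` has an irreducible `G`-invariant `FN`-submodule `W` with
`End_{FN}(W) = F`, affording `R : N → GL(W)`.  Then there are a representation
`S' : G → GL(U ⊗_F W)` equivalent to `S` and irreducible projective representations
`X : G → GL(W)` and `Y : G → GL(U)` with (a) `S'(g) = Y(g) ⊗ X(g)` for all `g`,
(b) `X` extends `R`, and (c) `Y(x) = 1` for all `x ∈ N`. -/
theorem clifford_projective_factorization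
    (F : Type*) [Field F] {G : Type*} [Group G] (N : Subgroup G) (hN : N.Normal)
    (V : Type v) [AddCommGroup V] [Module F V] (ρ : Representation F G V)
    (hρ : IsIrreducibleRep F ρ)
    (p : Submodule F V) (hp : ∀ n : ↥N, ∀ v ∈ p, (ρ.comp N.subtype) n v ∈ p)
    (hpirr : IsIrreducibleRep F (subRep F (ρ.comp N.subtype) p hp))
    (hGinv : ∀ g : G,
      RepIso F ((subRep F (ρ.comp N.subtype) p hp).comp (conjHom hN g))
        (subRep F (ρ.comp N.subtype) p hp))
    (hEnd : ∀ f : ↥p →ₗ[F] ↥p,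
      (∀ (n : ↥N) (w : ↥p), f ((subRep F (ρ.comp N.subtype) p hp) n w)
          = (subRep F (ρ.comp N.subtype) p hp) n (f w)) →
        ∃ c : F, ∀ w : ↥p, f w = c • w) :
    ∃ (U : Type v) (_ : AddCommGroup U) (_ : Module F U)
      (ρ' : Representation F G (U ⊗[F] ↥p))
      (X : G → (↥p →ₗ[F] ↥p)) (Y : G → (U →ₗ[F] U)) (α β : G → G → Fˣ),
      RepIso F ρ ρ' ∧
      IsProjRep F X α ∧ IsProjIrred F X ∧
      IsProjRep F Y β ∧ IsProjIrred F Y ∧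
      (∀ g : G, ρ' g = TensorProduct.map (Y g) (X g)) ∧
      (∀ n : ↥N, X (n : G) = (subRep F (ρ.comp N.subtype) p hp) n) ∧
      (∀ n : ↥N, Y (n : G) = LinearMap.id) := by
  have := hpirr.1
  have := nontrivial_intertwiningMap_subRep (ρ.comp N.subtype) p hp
  obtain ⟨E, hE, hEN⟩ := exists_isConjIntertwining _ hGinv
  obtain ⟨α, hX⟩ := hE.exists_isProjRep hEnd
  let ev := LinearEquiv.ofBijective _
    ⟨tensorEval_injective hpirr hEnd, tensorEval_surjective hρ hE⟩
  obtain ⟨ρ', hρρ', hρ'⟩ :=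
    exists_repIso_of_linearEquiv ρ ev _ (tensorEval_comp_map_intertwinerAction hE)
  exact ⟨_, _, _, ρ', fun g => E g, intertwinerAction ρ hE, α, _, hρρ', hX,
    hpirr.isProjIrred_of_extends _ hEN, isProjRep_intertwinerAction hE hEN hX,
    isProjIrred_intertwinerAction hρ hpirr hEnd hE, hρ', hEN, intertwinerAction_of_mem hE hEN⟩
end

section
/- Let F be a field, N ⊴ G groups, and let R : N → GL(W) be an irreducible representation over F that is G-invariant and satisfies End_{FN}(W) = F. Let X : G → GL(W) be a projective representation extending R with factor set α ∈ Z²(G,F*) satisfying α(g₁x₁, g₂x₂) = α(g₁,g₂) for all g₁,g₂ ∈ G and x₁,x₂ ∈ N. Then there exists an irreducible projective representation Y : G → GL(U) with factor set β = α⁻¹ and Y(x) = 1 for all x ∈ N. Moreover, for any such Y, the map S : G → GL(U ⊗_F W) defined by S(g) = Y(g) ⊗ X(g) is an irreducible (ordinary) representation of G, and the restriction of U ⊗_F W to N is the direct sum of dim_F(U) copies of W. -/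
open scoped TensorProduct DirectSum

universe u

/-! For (a), let `g` act on the permutation module `F[G/N]` by `δ_{hN} ↦ α(g,h)⁻¹ δ_{ghN}`; this is
well defined and satisfies the factor-set law for `α⁻¹` because `α` is a cocycle constant on
`N`-cosets, and `N` acts trivially because `N` is normal and `α(n, h) = α(1, h) = 1`. The module is
cyclic on `δ_N`, so its quotient by an invariant subspace maximal among those avoiding `δ_N`
(Zorn) is irreducible.

For (b), the factor sets of `Y` and `X` cancel, so `S` is a representation, and on `N` it is
`1 ⊗ R`; a basis of `U` splits it into copies of `W`. A nonzero `S`-invariant subspace `p` is then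
stable under `1 ⊗ R(a)` for all `a ∈ FN`, and by Jacobson density (using `End_{FN}(W) = F`) `R(a)`
can send one basis vector occurring in an element of `p` to any `w` and the others to `0`. Hence
`u ⊗ W ⊆ p` for some `u ≠ 0`; the `u` with this property form a `Y`-invariant subspace, hence all
of `U`, and `p` is everything. -/

section Density

variable {F : Type*} [Field F] {G : Type*} [Monoid G] {V : Type*} [AddCommGroup V] [Module F V]

theorem IsIrreducibleRep.isSimpleModule_asModule {ρ : Representation F G V}
    (hρ : IsIrreducibleRep F ρ) : IsSimpleModule (MonoidAlgebra F G) ρ.asModule := by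
  rw [← Representation.irreducible_iff_isSimpleModule_asModule]
  have := hρ.1
  refine { exists_pair_ne := ⟨⊥, ⊤, fun h => bot_ne_top (congrArg (·.toSubmodule) h)⟩,
           eq_bot_or_eq_top := fun q => ?_ }
  exact (hρ.2 q.toSubmodule q.apply_mem_toSubmodule).imp
    (fun h => Subrepresentation.toSubmodule_injective h)
    (fun h => Subrepresentation.toSubmodule_injective h)

theorem exists_asAlgebraHom_eqOn (ρ : Representation F G V) (hρ : IsIrreducibleRep F ρ)
    (hEnd : ∀ f : V →ₗ[F] V, (∀ (g : G) (v : V), f (ρ g v) = ρ g (f v)) →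
      ∃ c : F, ∀ v : V, f v = c • v)
    (f : V →ₗ[F] V) (s : Finset V) :
    ∃ r : MonoidAlgebra F G, Set.EqOn (ρ.asAlgebraHom r) f s := by
  have := hρ.isSimpleModule_asModule
  let e := ρ.asModuleEquiv
  have hcomm : ∀ (φ : Module.End (MonoidAlgebra F G) ρ.asModule) (v : ρ.asModule),
      e.symm (f (e (φ v))) = φ (e.symm (f (e v))) := by
    intro φ v
    obtain ⟨c, hc⟩ := hEnd (e.toLinearMap ∘ₗ φ.restrictScalars F ∘ₗ e.symm.toLinearMap)
      fun g w => by
        simp only [LinearMap.comp_apply, LinearEquiv.coe_coe, LinearMap.restrictScalars_apply,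
          Representation.asModuleEquiv_symm_map_rho, LinearMap.map_smul, e,
          Representation.asModuleEquiv_map_smul, Representation.asAlgebraHom_of]
    have hφ : ∀ w, φ w = e.symm (c • e w) := fun w => by
      simpa using congrArg e.symm (hc (e w))
    rw [hφ, hφ]
    simp only [LinearEquiv.apply_symm_apply, map_smul]
  obtain ⟨r, hr⟩ := jacobson_density ⟨⟨fun v => e.symm (f (e v)), by simp⟩, hcomm⟩
    (s.map e.symm.toEquiv.toEmbedding)
  refine ⟨r, fun v hv => ?_⟩
  have := hr (e.symm v) (Finset.mem_map_equiv.2 (by simpa using hv))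
  simpa [e, Representation.asModuleEquiv_map_smul] using (congrArg e this).symm

end Density

section ProjectiveFamilies

variable {R : Type*} [CommRing R] {G : Type*} [Group G] {V : Type*} [AddCommGroup V] [Module R V]

theorem bijective_of_comp_eq_smul {X : G → Module.End R V} (c : G → G → Rˣ)
    (hmul : ∀ g₁ g₂, X g₁ ∘ₗ X g₂ = (c g₁ g₂ : R) • X (g₁ * g₂)) (h1 : X 1 = LinearMap.id)
    (g : G) : Function.Bijective (X g) := by
  have h := fun g₁ g₂ v => LinearMap.congr_fun (hmul g₁ g₂) v
  simp only [LinearMap.comp_apply, LinearMap.smul_apply] at h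
  refine ⟨Function.LeftInverse.injective (g := fun v => (c g⁻¹ g)⁻¹ • X g⁻¹ v) fun v => ?_,
    Function.RightInverse.surjective (g := fun v => (c g g⁻¹)⁻¹ • X g⁻¹ v) fun v => ?_⟩
  · simp [h, h1, Units.smul_def, smul_smul]
  · simp [h, h1, Units.smul_def, smul_smul]

theorem mapQ_comp_mapQ_eq_smul (M : Submodule R V) {f g h : Module.End R V}
    (hf : M ≤ M.comap f) (hg : M ≤ M.comap g) (hh : M ≤ M.comap h) {c : R}
    (e : f ∘ₗ g = c • h) : M.mapQ M f hf ∘ₗ M.mapQ M g hg = c • M.mapQ M h hh := by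
  ext v
  simpa using congrArg M.mkQ (LinearMap.congr_fun e v)

end ProjectiveFamilies

section CyclicQuotient

variable {R : Type*} [Ring R] {V : Type*} [AddCommGroup V] [Module R V]

theorem exists_irreducible_quotient {ι : Type*} (T : ι → Module.End R V) {δ : V} (hδ : δ ≠ 0)
    (hcyc : ∀ p : Submodule R V, (∀ i, ∀ v ∈ p, T i v ∈ p) → δ ∈ p → p = ⊤) :
    ∃ (M : Submodule R V) (hM : ∀ i, M ≤ M.comap (T i)), Nontrivial (V ⧸ M) ∧
      ∀ p : Submodule R (V ⧸ M), (∀ i, ∀ u ∈ p, M.mapQ M (T i) (hM i) u ∈ p) →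
        p = ⊥ ∨ p = ⊤ := by
  let S : Set (Submodule R V) := {p | (∀ i, ∀ v ∈ p, T i v ∈ p) ∧ δ ∉ p}
  have hbot : ⊥ ∈ S := ⟨fun i v hv => by simp_all, by simpa using hδ⟩
  obtain ⟨M, -, hM⟩ := zorn_le_nonempty₀ S (fun c hcS hc y hy => by
    have hmem := fun v => Submodule.mem_sSup_of_directed ⟨y, hy⟩ hc.directedOn (z := v)
    refine ⟨sSup c, ⟨fun i v hv => ?_, fun hδc => ?_⟩, fun z hz => le_sSup hz⟩
    · obtain ⟨p, hp, hvp⟩ := (hmem v).1 hv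
      exact (hmem _).2 ⟨p, hp, (hcS hp).1 i v hvp⟩
    · obtain ⟨p, hp, hδp⟩ := (hmem δ).1 hδc
      exact (hcS hp).2 hδp) ⊥ hbot
  refine ⟨M, fun i v hv => hM.1.1 i v hv,
    nontrivial_of_ne (M.mkQ δ) 0 (by simpa using hM.1.2), fun p hp => ?_⟩
  let q := p.comap M.mkQ
  have hqinv : ∀ i, ∀ v ∈ q, T i v ∈ q := fun i v hv => by simpa [q] using hp i _ hv
  have hMq : M ≤ q := fun v hv => by simp [q, (Submodule.Quotient.mk_eq_zero M).2 hv]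
  by_cases hδq : δ ∈ q
  · refine .inr (eq_top_iff.2 fun u _ => ?_)
    obtain ⟨v, rfl⟩ := M.mkQ_surjective u
    show v ∈ q
    exact (hcyc q hqinv hδq).symm ▸ Submodule.mem_top
  · refine .inl (eq_bot_iff.2 fun u hu => ?_)
    obtain ⟨v, rfl⟩ := M.mkQ_surjective u
    simpa using hM.2 ⟨hqinv, hδq⟩ hMq hu

end CyclicQuotient

section TwistedAction

variable {R : Type*} [CommRing R] {G : Type*} [Group G] (N : Subgroup G) (β : G → G → Rˣ)

/-- `g` sends `δ_{hN}` to `β(g, h) δ_{ghN}`, with `h` the representative `(hN).out`. -/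
noncomputable def twistedAction (g : G) : Module.End R (G ⧸ N →₀ R) :=
  Finsupp.lsum R fun q => (β g q.out : R) • Finsupp.lsingle (g • q)

variable {N β}

theorem twistedAction_single (hβ : ∀ (g h : G) (x : N), β g (h * x) = β g h) (g h : G) (c : R) :
    twistedAction N β g (Finsupp.single (h : G ⧸ N) c) =
      Finsupp.single ((g * h : G) : G ⧸ N) (β g h * c) := by
  obtain ⟨x, hx⟩ := QuotientGroup.mk_out_eq_mul N h
  simp [twistedAction, hx, hβ, MulAction.Quotient.smul_mk, mul_comm]

theorem twistedAction_comp (hβ : ∀ (g h : G) (x : N), β g (h * x) = β g h)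
    (hcoc : ∀ g₁ g₂ g₃, β g₁ g₂ * β (g₁ * g₂) g₃ = β g₂ g₃ * β g₁ (g₂ * g₃)) (g₁ g₂ : G) :
    twistedAction N β g₁ ∘ₗ twistedAction N β g₂ =
      (β g₁ g₂ : R) • twistedAction N β (g₁ * g₂) := by
  refine Finsupp.lhom_ext fun q c => ?_
  obtain ⟨h, rfl⟩ := QuotientGroup.mk_surjective q
  simp only [LinearMap.comp_apply, LinearMap.smul_apply, twistedAction_single hβ,
    Finsupp.smul_single, smul_eq_mul, mul_assoc]
  congr 1
  rw [← mul_assoc, ← mul_assoc, ← Units.val_mul, ← Units.val_mul, hcoc, mul_comm (β g₂ h)]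

theorem twistedAction_of_mem [N.Normal]
    (hβ : ∀ (g₁ g₂ : G) (x₁ x₂ : N), β (g₁ * x₁) (g₂ * x₂) = β g₁ g₂) (hβ1 : ∀ g, β 1 g = 1)
    (n : N) : twistedAction N β n = LinearMap.id := by
  refine Finsupp.lhom_ext fun q c => ?_
  obtain ⟨h, rfl⟩ := QuotientGroup.mk_surjective q
  have hnh : β n h = 1 := by simpa [hβ1] using hβ 1 h n 1
  have hmk : ((n * h : G) : G ⧸ N) = h := by
    rw [QuotientGroup.eq, mul_inv_rev]
    simpa using Subgroup.Normal.conj_mem inferInstance _ (N.inv_mem n.2) h⁻¹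
  rw [twistedAction_single (fun g h x => by simpa using hβ g h 1 x), hnh, hmk]
  simp

theorem twistedAction_cyclic (hβ : ∀ (g h : G) (x : N), β g (h * x) = β g h)
    (p : Submodule R (G ⧸ N →₀ R)) (hp : ∀ g, ∀ v ∈ p, twistedAction N β g v ∈ p)
    (h1 : Finsupp.single ((1 : G) : G ⧸ N) 1 ∈ p) : p = ⊤ := by
  refine Submodule.eq_top_iff'.2 fun v => ?_
  induction v using Finsupp.induction_linear with
  | zero => exact p.zero_mem
  | add f g hf hg => exact p.add_mem hf hg
  | single q c =>
    obtain ⟨h, rfl⟩ := QuotientGroup.mk_surjective q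
    have := p.smul_mem (c * ((β h 1)⁻¹ : Rˣ)) (hp h _ h1)
    simpa [twistedAction_single hβ, Finsupp.smul_single] using this

end TwistedAction

theorem exists_isProjIrred_trivial_on {F G : Type u} [Field F] [Group G] (N : Subgroup G)
    [N.Normal] (β : G → G → Fˣ)
    (hcoc : ∀ g₁ g₂ g₃, β g₁ g₂ * β (g₁ * g₂) g₃ = β g₂ g₃ * β g₁ (g₂ * g₃))
    (hβ1 : ∀ g, β 1 g = 1)
    (hβ : ∀ (g₁ g₂ : G) (x₁ x₂ : N), β (g₁ * x₁) (g₂ * x₂) = β g₁ g₂) :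
    ∃ (U : Type u) (_ : AddCommGroup U) (_ : Module F U) (Y : G → (U →ₗ[F] U)),
      IsProjRep F Y β ∧ IsProjIrred F Y ∧ ∀ n : N, Y n = LinearMap.id := by
  have hβr : ∀ (g h : G) (x : N), β g (h * x) = β g h := fun g h x => by simpa using hβ g h 1 x
  obtain ⟨M, hM, hMnt, hMirr⟩ := exists_irreducible_quotient (twistedAction N β)
    (Finsupp.single_ne_zero.2 one_ne_zero) (twistedAction_cyclic hβr)
  let Y g := M.mapQ M (twistedAction N β g) (hM g)
  have hYmul : ∀ g₁ g₂, Y g₁ ∘ₗ Y g₂ = (β g₁ g₂ : F) • Y (g₁ * g₂) := fun g₁ g₂ =>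
    mapQ_comp_mapQ_eq_smul M _ _ _ (twistedAction_comp hβr hcoc g₁ g₂)
  have hYN : ∀ n : N, Y n = LinearMap.id := fun n => by
    simp only [Y, twistedAction_of_mem hβ hβ1, Submodule.mapQ_id]
  have hY1 : Y 1 = LinearMap.id := by simpa using hYN 1
  exact ⟨_, _, _, Y, ⟨bijective_of_comp_eq_smul β hYmul hY1, hYmul⟩, ⟨hMnt, hMirr⟩, hYN⟩

namespace IsProjRep

variable {F : Type*} [Field F] {G : Type*} [Group G] {V : Type*} [AddCommGroup V] [Module F V]
  {X : G → Module.End F V} {α : G → G → Fˣ}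

theorem apply_one_eq_smul (hX : IsProjRep F X α) : X 1 = (α 1 1 : F) • LinearMap.id := by
  ext w
  obtain ⟨v, rfl⟩ := (hX.1 1).2 w
  simpa using LinearMap.congr_fun (hX.2 1 1) v

theorem smul_left_injective [Nontrivial V] (hX : IsProjRep F X α) (g : G) :
    Function.Injective fun c : F => c • X g := by
  intro c c' h
  obtain ⟨v, hv⟩ := exists_ne (0 : V)
  have hXv : X g v ≠ 0 := fun h0 => hv ((hX.1 g).1 (by rw [h0, map_zero]))
  exact _root_.smul_left_injective F hXv (LinearMap.congr_fun h v)

theorem cocycle [Nontrivial V] (hX : IsProjRep F X α) (g₁ g₂ g₃ : G) :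
    α g₁ g₂ * α (g₁ * g₂) g₃ = α g₂ g₃ * α g₁ (g₂ * g₃) := by
  refine Units.ext (hX.smul_left_injective (g₁ * g₂ * g₃) ?_)
  calc ((α g₁ g₂ * α (g₁ * g₂) g₃ : Fˣ) : F) • X (g₁ * g₂ * g₃)
      = (X g₁ ∘ₗ X g₂) ∘ₗ X g₃ := by rw [hX.2, LinearMap.smul_comp, hX.2, smul_smul]; rfl
    _ = X g₁ ∘ₗ (X g₂ ∘ₗ X g₃) := LinearMap.comp_assoc _ _ _
    _ = ((α g₂ g₃ * α g₁ (g₂ * g₃) : Fˣ) : F) • X (g₁ * g₂ * g₃) := by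
      rw [hX.2, LinearMap.comp_smul, hX.2, smul_smul, mul_assoc]; rfl

theorem factor_one_left [Nontrivial V] (hX : IsProjRep F X α) (h1 : X 1 = LinearMap.id)
    (g : G) : α 1 g = 1 := by
  refine Units.ext (hX.smul_left_injective g ?_)
  simpa [h1] using (hX.2 1 g).symm

variable {U : Type*} [AddCommGroup U] [Module F U] {Y : G → Module.End F U}

noncomputable def tensorRep (hY : IsProjRep F Y fun g₁ g₂ => (α g₁ g₂)⁻¹)
    (hX : IsProjRep F X α) : Representation F G (U ⊗[F] V) where
  toFun g := TensorProduct.map (Y g) (X g)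
  map_one' := by
    rw [hY.apply_one_eq_smul, hX.apply_one_eq_smul, TensorProduct.map_smul_left,
      TensorProduct.map_smul_right, smul_smul, ← Units.val_mul, inv_mul_cancel, Units.val_one,
      one_smul, TensorProduct.map_id]
    rfl
  map_mul' g₁ g₂ := by
    rw [Module.End.mul_eq_comp, ← TensorProduct.map_comp, hY.2, hX.2, TensorProduct.map_smul_left,
      TensorProduct.map_smul_right, smul_smul, ← Units.val_mul, inv_mul_cancel, Units.val_one,
      one_smul]

theorem tensorRep_apply (hY : IsProjRep F Y fun g₁ g₂ => (α g₁ g₂)⁻¹) (hX : IsProjRep F X α)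
    (g : G) : hY.tensorRep hX g = TensorProduct.map (Y g) (X g) :=
  rfl

end IsProjRep

section TensorIrreducible

variable {F : Type*} [Field F] {U : Type*} [AddCommGroup U] [Module F U]
  {V : Type*} [AddCommGroup V] [Module F V]

theorem lTensor_asAlgebraHom_mem {H : Type*} [Monoid H] (ρ : Representation F H V)
    {p : Submodule F (U ⊗[F] V)} (hp : ∀ h, ∀ z ∈ p, LinearMap.lTensor U (ρ h) z ∈ p)
    (r : MonoidAlgebra F H) : ∀ z ∈ p, LinearMap.lTensor U (ρ.asAlgebraHom r) z ∈ p := by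
  induction r using MonoidAlgebra.induction_linear with
  | zero => simp
  | add r s hr hs =>
    intro z hz
    simpa only [map_add, LinearMap.lTensor_add, LinearMap.add_apply] using
      p.add_mem (hr z hz) (hs z hz)
  | single h c =>
    intro z hz
    simpa [Representation.asAlgebraHom_single, LinearMap.lTensor_smul] using
      p.smul_mem c (hp h z hz)

theorem exists_ne_zero_forall_tmul_mem {H : Type*} [Monoid H] (ρ : Representation F H V)
    (hρ : IsIrreducibleRep F ρ)
    (hEnd : ∀ f : V →ₗ[F] V, (∀ (h : H) (v : V), f (ρ h v) = ρ h (f v)) →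
      ∃ c : F, ∀ v : V, f v = c • v)
    {p : Submodule F (U ⊗[F] V)} (hp : ∀ h, ∀ z ∈ p, LinearMap.lTensor U (ρ h) z ∈ p)
    (hp0 : p ≠ ⊥) : ∃ u ≠ 0, ∀ v, u ⊗ₜ[F] v ∈ p := by
  classical
  obtain ⟨t, htp, ht0⟩ := (Submodule.ne_bot_iff p).1 hp0
  let b := Module.Basis.ofVectorSpace F V
  obtain ⟨c, rfl⟩ := TensorProduct.eq_repr_basis_right b t
  obtain ⟨i₀, hi₀⟩ : c.support.Nonempty :=
    Finsupp.support_nonempty_iff.2 (by rintro rfl; simp at ht0)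
  refine ⟨c i₀, Finsupp.mem_support_iff.1 hi₀, fun v => ?_⟩
  obtain ⟨r, hr⟩ := exists_asAlgebraHom_eqOn ρ hρ hEnd ((b.coord i₀).smulRight v)
    (c.support.image b)
  have hrb : ∀ i ∈ c.support, ρ.asAlgebraHom r (b i) = if i = i₀ then v else 0 := fun i hi => by
    rw [hr (Finset.mem_image_of_mem b hi)]
    by_cases h : i = i₀ <;> simp [h, Ne.symm]
  convert lTensor_asAlgebraHom_mem ρ hp r _ htp using 1
  rw [Finsupp.sum, map_sum, Finset.sum_eq_single i₀ (fun i hi hne => by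
      simp [hrb i hi, hne]) (fun h => absurd hi₀ h), LinearMap.lTensor_tmul, hrb i₀ hi₀,
    if_pos rfl]

theorem isIrreducibleRep_of_eq_map {G : Type*} [Group G] (ρ : Representation F G (U ⊗[F] V))
    (Y : G → Module.End F U) (X : G → Module.End F V)
    (hρ : ∀ g, ρ g = TensorProduct.map (Y g) (X g)) (hX : ∀ g, Function.Surjective (X g))
    (hY : IsProjIrred F Y) (N : Subgroup G) (σ : Representation F N V)
    (hσ : IsIrreducibleRep F σ)
    (hEnd : ∀ f : V →ₗ[F] V, (∀ (n : N) (v : V), f (σ n v) = σ n (f v)) →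
      ∃ c : F, ∀ v : V, f v = c • v)
    (hρN : ∀ n : N, ρ n = LinearMap.lTensor U (σ n)) : IsIrreducibleRep F ρ := by
  have := hY.1
  have := hσ.1
  refine ⟨inferInstance, fun p hp => (eq_or_ne p ⊥).imp_right fun hp0 => ?_⟩
  obtain ⟨u₀, hu₀, hu₀p⟩ := exists_ne_zero_forall_tmul_mem σ hσ hEnd
    (fun n z hz => hρN n ▸ hp n z hz) hp0
  let U₀ : Submodule F U := ⨅ v, p.comap ((TensorProduct.mk F U V).flip v)
  have hU₀ : ∀ u, u ∈ U₀ ↔ ∀ v, u ⊗ₜ[F] v ∈ p := by simp [U₀]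
  have hinv : ∀ g, ∀ u ∈ U₀, Y g u ∈ U₀ := by
    intro g u hu
    rw [hU₀] at hu ⊢
    intro v
    obtain ⟨v', rfl⟩ := hX g v
    simpa [hρ] using hp g _ (hu v')
  have htop : U₀ = ⊤ := (hY.2 U₀ hinv).resolve_left fun h0 =>
    hu₀ (by simpa [h0] using (hU₀ u₀).2 hu₀p)
  rw [eq_top_iff, ← TensorProduct.span_tmul_eq_top, Submodule.span_le]
  rintro _ ⟨u, v, rfl⟩
  exact (hU₀ u).1 (htop ▸ Submodule.mem_top) v

theorem repIso_dsumRep_of_eq_lTensor {H : Type*} [Monoid H] {ι : Type*}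
    (b : Module.Basis ι F U) (σ : Representation F H V) (ρ : Representation F H (U ⊗[F] V))
    (hρ : ∀ h, ρ h = LinearMap.lTensor U (σ h)) : RepIso F ρ (dsumRep F fun _ : ι => σ) := by
  classical
  let e := TensorProduct.equivFinsuppOfBasisLeft b ≪≫ₗ finsuppLequivDFinsupp (M := V) F
  have he : ∀ u v i, e (u ⊗ₜ v) i = b.repr u i • v := fun u v i =>
    TensorProduct.equivFinsuppOfBasisLeft_apply_tmul_apply b u v i
  refine ⟨e, fun h z => ?_⟩
  induction z using TensorProduct.induction_on with
  | zero => simp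
  | add x y hx hy => simp only [map_add, hx, hy]
  | tmul u v =>
    ext i
    show e (ρ h (u ⊗ₜ v)) i = DFinsupp.mapRange.linearMap (fun _ => σ h) (e (u ⊗ₜ v)) i
    rw [hρ, LinearMap.lTensor_tmul, DFinsupp.mapRange.linearMap_apply, DFinsupp.mapRange_apply,
      he, he, map_smul]

end TensorIrreducible

theorem clifford_tensor_with_projective_general
    (F : Type u) [Field F] {G : Type u} [Group G] (N : Subgroup G) (hN : N.Normal)
    (W : Type u) [AddCommGroup W] [Module F W] (σ : Representation F ↥N W)
    (hσ : IsIrreducibleRep F σ)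
    (hEnd : ∀ f : W →ₗ[F] W,
      (∀ (n : ↥N) (w : W), f (σ n w) = σ n (f w)) → ∃ c : F, ∀ w : W, f w = c • w)
    (X : G → (W →ₗ[F] W)) (α : G → G → Fˣ)
    (hX : IsProjRep F X α)
    (hXR : ∀ n : ↥N, X (n : G) = σ n)
    (hα : ∀ (g₁ g₂ : G) (x₁ x₂ : ↥N), α (g₁ * (x₁ : G)) (g₂ * (x₂ : G)) = α g₁ g₂) :
    -- (a): existence of Y
    (∃ (U : Type u) (_ : AddCommGroup U) (_ : Module F U) (Y : G → (U →ₗ[F] U)),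
      IsProjRep F Y (fun g₁ g₂ => (α g₁ g₂)⁻¹) ∧ IsProjIrred F Y ∧
        ∀ n : ↥N, Y (n : G) = LinearMap.id) ∧
    -- moreover, for any such Y, `S(g) = Y(g) ⊗ X(g)` is an irreducible representation
    -- whose restriction to N is the direct sum of dim_F U copies of W:
    ∀ (U : Type u) [AddCommGroup U] [Module F U] (Y : G → (U →ₗ[F] U)),
      IsProjRep F Y (fun g₁ g₂ => (α g₁ g₂)⁻¹) → IsProjIrred F Y →
        (∀ n : ↥N, Y (n : G) = LinearMap.id) →
        ∃ ρS : Representation F G (U ⊗[F] W),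
          (∀ g : G, ρS g = TensorProduct.map (Y g) (X g)) ∧
          IsIrreducibleRep F ρS ∧
          ∃ (ι : Type u) (b : Module.Basis ι F U),
            RepIso F (ρS.comp N.subtype) (dsumRep F fun _ : ι => σ) := by
  have := hN
  have := hσ.1
  have hX1 : X 1 = LinearMap.id := by
    rw [← Module.End.one_eq_id]
    simpa using hXR 1
  refine ⟨exists_isProjIrred_trivial_on N _
    (fun g₁ g₂ g₃ => by rw [← mul_inv, ← mul_inv, hX.cocycle])
    (fun g => by rw [hX.factor_one_left hX1, inv_one]) (fun g₁ g₂ x₁ x₂ => by rw [hα]), ?_⟩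
  intro U _ _ Y hY hYirr hYN
  have hSN : ∀ n : N, hY.tensorRep hX n = LinearMap.lTensor U (σ n) := fun n => by
    rw [hY.tensorRep_apply, hYN, hXR]
    rfl
  exact ⟨hY.tensorRep hX, hY.tensorRep_apply hX,
    isIrreducibleRep_of_eq_map _ Y X (hY.tensorRep_apply hX) (fun g => (hX.1 g).2) hYirr N σ hσ
      hEnd hSN,
    _, Module.Free.chooseBasis F U,
    repIso_dsumRep_of_eq_lTensor (Module.Free.chooseBasis F U) σ _ hSN⟩

/-- Theorem 3.9 (Clifford): let `N ⊴ G`, let `R : N → GL(W)` be an irreducible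
`G`-invariant representation with `End_{FN}(W) = F`, and let `X : G → GL(W)` be a
projective representation extending `R` whose factor set `α` is constant on cosets of `N`.
Then (a) there exists an irreducible projective representation `Y : G → GL(U)` trivial on
`N` with factor set `α⁻¹`; moreover, for any such `Y`, the map `S(g) = Y(g) ⊗ X(g)` is an
irreducible ordinary representation of `G` on `U ⊗_F W` whose restriction to `N` is a
direct sum of `dim_F U` copies of `W`. -/
theorem clifford_tensor_with_projective
    (F : Type u) [Field F] {G : Type u} [Group G] (N : Subgroup G) (hN : N.Normal)
    (W : Type u) [AddCommGroup W] [Module F W] (σ : Representation F ↥N W)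
    (hσ : IsIrreducibleRep F σ)
    (hGinv : ∀ g : G, RepIso F (σ.comp (conjHom hN g)) σ)
    (hEnd : ∀ f : W →ₗ[F] W,
      (∀ (n : ↥N) (w : W), f (σ n w) = σ n (f w)) → ∃ c : F, ∀ w : W, f w = c • w)
    (X : G → (W →ₗ[F] W)) (α : G → G → Fˣ)
    (hX : IsProjRep F X α)
    (hXR : ∀ n : ↥N, X (n : G) = σ n)
    (hα : ∀ (g₁ g₂ : G) (x₁ x₂ : ↥N), α (g₁ * (x₁ : G)) (g₂ * (x₂ : G)) = α g₁ g₂) :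
    -- (a): existence of Y
    (∃ (U : Type u) (_ : AddCommGroup U) (_ : Module F U) (Y : G → (U →ₗ[F] U)),
      IsProjRep F Y (fun g₁ g₂ => (α g₁ g₂)⁻¹) ∧ IsProjIrred F Y ∧
        ∀ n : ↥N, Y (n : G) = LinearMap.id) ∧
    -- moreover, for any such Y, `S(g) = Y(g) ⊗ X(g)` is an irreducible representation
    -- whose restriction to N is the direct sum of dim_F U copies of W:
    ∀ (U : Type u) [AddCommGroup U] [Module F U] (Y : G → (U →ₗ[F] U)),
      IsProjRep F Y (fun g₁ g₂ => (α g₁ g₂)⁻¹) → IsProjIrred F Y →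
        (∀ n : ↥N, Y (n : G) = LinearMap.id) →
        ∃ ρS : Representation F G (U ⊗[F] W),
          (∀ g : G, ρS g = TensorProduct.map (Y g) (X g)) ∧
          IsIrreducibleRep F ρS ∧
          ∃ (ι : Type u) (b : Module.Basis ι F U),
            RepIso F (ρS.comp N.subtype) (dsumRep F fun _ : ι => σ) :=
  clifford_tensor_with_projective_general F N hN W σ hσ hEnd X α hX hXR hα
end

section
/- Let F be a field, N ⊴ G groups, R : N → GL(W) an irreducible G-invariant representation with End_{FN}(W) = F, and X : G → GL(W) a projective representation extending R with factor set α ∈ Z²(G,F*) constant on cosets of N (i.e. α(g₁x₁,g₂x₂) = α(g₁,g₂) for x₁,x₂ ∈ N). For i = 1,2, let Yᵢ : G → GL(Uᵢ) be an irreducible projective representation with factor set α⁻¹ that is trivial on N, and define Sᵢ : G → GL(Uᵢ ⊗_F W) by Sᵢ(g) = Yᵢ(g) ⊗ X(g). If S₁ and S₂ are equivalent representations of G, then Y₁ and Y₂ are strictly equivalent: there is an F-linear isomorphism f : U₁ → U₂ with f(Y₁(g)u) = Y₂(g)f(u) for all g ∈ G and u ∈ U₁. -/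
/-! Since `N` acts trivially on `Uᵢ` and `End_{FN}(W) = F`, every `FN`-map `W → Uᵢ ⊗ W` is
`w ↦ u ⊗ w` for some `u` (read off in coordinates of a basis of `Uᵢ`). Hence an
`FN`-isomorphism `U₁ ⊗ W ≅ U₂ ⊗ W` is `f ⊗ id` for a linear isomorphism `f : U₁ ≅ U₂`.
Evaluating the `G`-equivariance of `f ⊗ id` on `u ⊗ w` gives
`f (Y₁ g u) ⊗ X g w = Y₂ g (f u) ⊗ X g w`, and `X g w ≠ 0` can be cancelled. -/

open scoped TensorProduct DirectSum

section TensorFactors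

variable {F : Type*} [Field F] {U U' W : Type*} [AddCommGroup U] [Module F U]
  [AddCommGroup U'] [Module F U'] [AddCommGroup W] [Module F W]

theorem tmul_left_injective {w : W} (hw : w ≠ 0) :
    Function.Injective (fun u : U => u ⊗ₜ[F] w) := by
  obtain ⟨φ, hφ⟩ := Module.Projective.exists_dual_eq_one F hw
  refine Function.LeftInverse.injective (g := TensorProduct.rid F U ∘ₗ φ.lTensor U) fun u => ?_
  simp [hφ]

theorem rTensor_injective [Nontrivial W] :
    Function.Injective (LinearMap.rTensor W : (U →ₗ[F] U') → U ⊗[F] W →ₗ[F] U' ⊗[F] W) := by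
  obtain ⟨w, hw⟩ := exists_ne (0 : W)
  intro f g hfg
  ext u
  exact tmul_left_injective hw (by simpa using LinearMap.congr_fun hfg (u ⊗ₜ[F] w))

variable {N : Type*} [Monoid N] (σ : Representation F N W)

theorem exists_tmul_eq_of_commute [Nontrivial W]
    (hEnd : ∀ f : W →ₗ[F] W,
      (∀ (n : N) (w : W), f (σ n w) = σ n (f w)) → ∃ c : F, ∀ w : W, f w = c • w)
    (ψ : W →ₗ[F] U ⊗[F] W) (hψ : ∀ (n : N) (w : W), ψ (σ n w) = (σ n).lTensor U (ψ w)) :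
    ∃ u : U, ∀ w : W, ψ w = u ⊗ₜ[F] w := by
  classical
  let b := Module.Basis.ofVectorSpace F U
  let E : U ⊗[F] W ≃ₗ[F] (_ →₀ W) :=
    (TensorProduct.congr b.repr (LinearEquiv.refl F W)).trans
      (TensorProduct.finsuppScalarLeft F W _)
  have hE_tmul (u : U) (w : W) (i) : E (u ⊗ₜ[F] w) i = b.repr u i • w := by
    simp [E, TensorProduct.congr_tmul]
  have hE_lTensor (n : N) (z : U ⊗[F] W) (i) : E ((σ n).lTensor U z) i = σ n (E z i) := by
    induction z using TensorProduct.induction_on with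
    | zero => simp
    | tmul u w => simp [hE_tmul]
    | add x y hx hy => simp [hx, hy]
  have hcoord (i) : ∃ c : F, ∀ w : W, E (ψ w) i = c • w :=
    hEnd (Finsupp.lapply i ∘ₗ E.toLinearMap ∘ₗ ψ) fun n w => by simp [hψ, hE_lTensor]
  choose c hc using hcoord
  obtain ⟨w₀, hw₀⟩ := exists_ne (0 : W)
  have hsupp (i) (hi : c i ≠ 0) : i ∈ (E (ψ w₀)).support := by
    rw [Finsupp.mem_support_iff, hc i w₀]
    exact smul_ne_zero hi hw₀
  refine ⟨b.repr.symm (Finsupp.onFinset _ c hsupp), fun w => E.injective ?_⟩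
  ext i
  rw [hc i w, hE_tmul, LinearEquiv.apply_symm_apply, Finsupp.onFinset_apply]

theorem exists_eq_rTensor_of_commute [Nontrivial W]
    (hEnd : ∀ f : W →ₗ[F] W,
      (∀ (n : N) (w : W), f (σ n w) = σ n (f w)) → ∃ c : F, ∀ w : W, f w = c • w)
    (T : U ⊗[F] W →ₗ[F] U' ⊗[F] W)
    (hT : ∀ (n : N) (z : U ⊗[F] W), T ((σ n).lTensor U z) = (σ n).lTensor U' (T z)) :
    ∃ f : U →ₗ[F] U', T = f.rTensor W := by
  have hT_tmul (u : U) : ∃ u' : U', ∀ w : W, T (u ⊗ₜ[F] w) = u' ⊗ₜ[F] w :=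
    exists_tmul_eq_of_commute σ hEnd (T ∘ₗ TensorProduct.mk F U W u) fun n w => by
      simpa using hT n (u ⊗ₜ[F] w)
  choose f₀ hf₀ using hT_tmul
  obtain ⟨w₀, hw₀⟩ := exists_ne (0 : W)
  obtain ⟨φ, hφ⟩ := Module.Projective.exists_dual_eq_one F hw₀
  -- `f₀` is linear: contracting the `W`-factor against `φ` recovers it from `T`
  let f : U →ₗ[F] U' :=
    TensorProduct.rid F U' ∘ₗ φ.lTensor U' ∘ₗ T ∘ₗ (TensorProduct.mk F U W).flip w₀
  have hf (u : U) : f u = f₀ u := by simp [f, hf₀, hφ]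
  exact ⟨f, TensorProduct.ext' fun u w => by simp [hf, hf₀]⟩

theorem exists_linearEquiv_tmul_eq_of_commute [Nontrivial W]
    (hEnd : ∀ f : W →ₗ[F] W,
      (∀ (n : N) (w : W), f (σ n w) = σ n (f w)) → ∃ c : F, ∀ w : W, f w = c • w)
    (e : U ⊗[F] W ≃ₗ[F] U' ⊗[F] W)
    (he : ∀ (n : N) (z : U ⊗[F] W), e ((σ n).lTensor U z) = (σ n).lTensor U' (e z)) :
    ∃ f : U ≃ₗ[F] U', ∀ (u : U) (w : W), e (u ⊗ₜ[F] w) = f u ⊗ₜ[F] w := by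
  obtain ⟨f, hf⟩ := exists_eq_rTensor_of_commute σ hEnd e.toLinearMap he
  obtain ⟨g, hg⟩ := exists_eq_rTensor_of_commute σ hEnd e.symm.toLinearMap fun n z =>
    e.symm_apply_eq.mpr (by rw [he, LinearEquiv.coe_coe, e.apply_symm_apply])
  have hfg : f ∘ₗ g = LinearMap.id := rTensor_injective (W := W) <| by
    rw [LinearMap.rTensor_comp, ← hf, ← hg, LinearMap.rTensor_id]
    exact e.comp_symm
  have hgf : g ∘ₗ f = LinearMap.id := rTensor_injective (W := W) <| by
    rw [LinearMap.rTensor_comp, ← hf, ← hg, LinearMap.rTensor_id]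
    exact e.symm_comp
  exact ⟨.ofLinearMap f g hfg hgf, fun u w => LinearMap.congr_fun hf (u ⊗ₜ[F] w)⟩

end TensorFactors

theorem strict_equivalence_of_tensor_factors_general
    (F : Type*) [Field F] {G : Type*} [Group G] (N : Subgroup G)
    (W : Type*) [AddCommGroup W] [Module F W] (σ : Representation F ↥N W)
    (hσ : IsIrreducibleRep F σ)
    (hEnd : ∀ f : W →ₗ[F] W,
      (∀ (n : ↥N) (w : W), f (σ n w) = σ n (f w)) → ∃ c : F, ∀ w : W, f w = c • w)
    (X : G → (W →ₗ[F] W)) (α : G → G → Fˣ)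
    (hX : IsProjRep F X α)
    (hXR : ∀ n : ↥N, X (n : G) = σ n)
    (U₁ : Type*) [AddCommGroup U₁] [Module F U₁] (Y₁ : G → (U₁ →ₗ[F] U₁))
    (U₂ : Type*) [AddCommGroup U₂] [Module F U₂] (Y₂ : G → (U₂ →ₗ[F] U₂))
    (hY₁N : ∀ n : ↥N, Y₁ (n : G) = LinearMap.id)
    (hY₂N : ∀ n : ↥N, Y₂ (n : G) = LinearMap.id)
    (ρS₁ : Representation F G (U₁ ⊗[F] W))
    (hS₁ : ∀ g : G, ρS₁ g = TensorProduct.map (Y₁ g) (X g))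
    (ρS₂ : Representation F G (U₂ ⊗[F] W))
    (hS₂ : ∀ g : G, ρS₂ g = TensorProduct.map (Y₂ g) (X g))
    (hequiv : RepIso F ρS₁ ρS₂) :
    ∃ f : U₁ ≃ₗ[F] U₂, ∀ (g : G) (u : U₁), f (Y₁ g u) = Y₂ g (f u) := by
  obtain ⟨e, he⟩ := hequiv
  have : Nontrivial W := hσ.1
  obtain ⟨f, hf⟩ := exists_linearEquiv_tmul_eq_of_commute σ hEnd e fun n z => by
    simpa only [hS₁, hS₂, hY₁N, hY₂N, hXR, LinearMap.lTensor_def] using he n z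
  refine ⟨f, fun g u => ?_⟩
  obtain ⟨w, hw⟩ := exists_ne (0 : W)
  have hXw : X g w ≠ 0 := (map_ne_zero_iff _ (hX.1 g).1).mpr hw
  apply tmul_left_injective (F := F) hXw
  simpa [hS₁, hS₂, hf] using he g (u ⊗ₜ[F] w)

/-- Theorem 3.9(b) (Clifford): with `N ⊴ G`, `R : N → GL(W)` irreducible, `G`-invariant and
with `End_{FN}(W) = F`, and `X : G → GL(W)` a projective representation extending `R` whose
factor set `α` is constant on cosets of `N`: if `Y₁, Y₂` are irreducible projective
representations of `G` trivial on `N` with factor set `α⁻¹` and the ordinary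
representations `Sᵢ(g) = Yᵢ(g) ⊗ X(g)` are equivalent, then `Y₁` and `Y₂` are strictly
equivalent. -/
theorem strict_equivalence_of_tensor_factors
    (F : Type*) [Field F] {G : Type*} [Group G] (N : Subgroup G) (hN : N.Normal)
    (W : Type*) [AddCommGroup W] [Module F W] (σ : Representation F ↥N W)
    (hσ : IsIrreducibleRep F σ)
    (hGinv : ∀ g : G, RepIso F (σ.comp (conjHom hN g)) σ)
    (hEnd : ∀ f : W →ₗ[F] W,
      (∀ (n : ↥N) (w : W), f (σ n w) = σ n (f w)) → ∃ c : F, ∀ w : W, f w = c • w)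
    (X : G → (W →ₗ[F] W)) (α : G → G → Fˣ)
    (hX : IsProjRep F X α)
    (hXR : ∀ n : ↥N, X (n : G) = σ n)
    (hα : ∀ (g₁ g₂ : G) (x₁ x₂ : ↥N), α (g₁ * (x₁ : G)) (g₂ * (x₂ : G)) = α g₁ g₂)
    (U₁ : Type*) [AddCommGroup U₁] [Module F U₁] (Y₁ : G → (U₁ →ₗ[F] U₁))
    (U₂ : Type*) [AddCommGroup U₂] [Module F U₂] (Y₂ : G → (U₂ →ₗ[F] U₂))
    (hY₁ : IsProjRep F Y₁ (fun g₁ g₂ => (α g₁ g₂)⁻¹)) (hY₁irr : IsProjIrred F Y₁)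
    (hY₁N : ∀ n : ↥N, Y₁ (n : G) = LinearMap.id)
    (hY₂ : IsProjRep F Y₂ (fun g₁ g₂ => (α g₁ g₂)⁻¹)) (hY₂irr : IsProjIrred F Y₂)
    (hY₂N : ∀ n : ↥N, Y₂ (n : G) = LinearMap.id)
    (ρS₁ : Representation F G (U₁ ⊗[F] W))
    (hS₁ : ∀ g : G, ρS₁ g = TensorProduct.map (Y₁ g) (X g))
    (ρS₂ : Representation F G (U₂ ⊗[F] W))
    (hS₂ : ∀ g : G, ρS₂ g = TensorProduct.map (Y₂ g) (X g))
    (hequiv : RepIso F ρS₁ ρS₂) :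
    ∃ f : U₁ ≃ₗ[F] U₂, ∀ (g : G) (u : U₁), f (Y₁ g u) = Y₂ g (f u) :=
  strict_equivalence_of_tensor_factors_general F N W σ hσ hEnd X α hX hXR U₁ Y₁ U₂ Y₂ hY₁N hY₂N ρS₁
    hS₁ ρS₂ hS₂ hequiv
end

section
/- Let F be a field, G₁ and G₂ groups, and G = G₁ × G₂. Let V₁, W₁ be irreducible FG₁-modules and V₂, W₂ irreducible FG₂-modules, and suppose V₁ ⊗_F V₂ ≅ W₁ ⊗_F W₂ as FG-modules (with the outer tensor product action). Then V₁ ≅ W₁ as FG₁-modules and V₂ ≅ W₂ as FG₂-modules. -/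
open scoped TensorProduct DirectSum

/-!
Restrict an isomorphism `e : V₁ ⊗ V₂ ≅ W₁ ⊗ W₂` to `G₁ × 1`, where it intertwines `ρV₁ g ⊗ id`
with `ρW₁ g ⊗ id`. Fixing `v₁, v₂ ≠ 0` and a functional `φ` on `W₂` whose slice `id ⊗ φ` does not kill
`e (v₁ ⊗ v₂)`, the map `v ↦ (id ⊗ φ) (e (v ⊗ v₂))` is a nonzero `G₁`-map `V₁ → W₁`, hence an
isomorphism by Schur's lemma. Swapping the tensor factors gives `V₂ ≅ W₂`.
-/
section Slice

variable {R M N : Type*} [CommSemiring R] [AddCommMonoid M] [Module R M]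
  [AddCommMonoid N] [Module R N]

noncomputable def rightSlice (φ : Module.Dual R N) : M ⊗[R] N →ₗ[R] M :=
  TensorProduct.rid R M ∘ₗ φ.lTensor M

@[simp]
theorem rightSlice_tmul (φ : Module.Dual R N) (m : M) (n : N) :
    rightSlice φ (m ⊗ₜ[R] n) = φ n • m := by
  simp [rightSlice]

theorem rightSlice_rTensor (φ : Module.Dual R N) (A : M →ₗ[R] M) (x : M ⊗[R] N) :
    rightSlice φ (A.rTensor N x) = A (rightSlice φ x) := by
  induction x using TensorProduct.induction_on with
  | zero => simp
  | tmul m n => simp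
  | add x y hx hy => simp only [map_add, hx, hy]

end Slice

section VectorSpace

variable {K M N : Type*} [Field K] [AddCommGroup M] [Module K M] [AddCommGroup N] [Module K N]

theorem exists_rightSlice_ne_zero {x : M ⊗[K] N} (hx : x ≠ 0) :
    ∃ φ : Module.Dual K N, rightSlice φ x ≠ 0 := by
  classical
  let b := Module.Basis.ofVectorSpace K N
  let E : M ⊗[K] N ≃ₗ[K] (_ →₀ M) :=
    LinearEquiv.lTensor M b.repr ≪≫ₗ TensorProduct.finsuppScalarRight K K M _
  have hE : ∀ y i, E y i = rightSlice (b.coord i) y := by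
    intro y i
    induction y using TensorProduct.induction_on with
    | zero => simp
    | tmul m n => simp [E, LinearEquiv.lTensor, TensorProduct.congr_tmul]
    | add y z hy hz => simp only [map_add, Finsupp.add_apply, hy, hz]
  obtain ⟨i, hi⟩ := Finsupp.ne_iff.1 ((E.map_ne_zero_iff).2 hx)
  exact ⟨b.coord i, by simpa [hE] using hi⟩

theorem tmul_ne_zero {m : M} {n : N} (hm : m ≠ 0) (hn : n ≠ 0) : m ⊗ₜ[K] n ≠ 0 := by
  obtain ⟨φ, hφ⟩ : ∃ φ : Module.Dual K N, φ n ≠ 0 := by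
    by_contra! h
    exact hn ((Module.forall_dual_apply_eq_zero_iff K n).1 h)
  intro h
  simpa [hφ, hm] using congrArg (rightSlice φ) h

end VectorSpace

section OuterTensor

variable {F : Type*} [Field F] {G₁ G₂ : Type*} [Monoid G₁] [Monoid G₂]
  {V₁ V₂ W₁ W₂ : Type*} [AddCommMonoid V₁] [Module F V₁] [AddCommMonoid V₂] [Module F V₂]
  [AddCommMonoid W₁] [Module F W₁] [AddCommMonoid W₂] [Module F W₂]

theorem outerRep_apply_mk_one (ρ₁ : Representation F G₁ V₁) (ρ₂ : Representation F G₂ V₂)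
    (g : G₁) : outerRep F ρ₁ ρ₂ (g, 1) = (ρ₁ g).rTensor V₂ := by
  simp [outerRep, Representation.tprod_apply, LinearMap.rTensor, Module.End.one_eq_id]

theorem comm_outerRep (ρ₁ : Representation F G₁ V₁) (ρ₂ : Representation F G₂ V₂)
    (g : G₁ × G₂) (x : V₁ ⊗[F] V₂) :
    TensorProduct.comm F V₁ V₂ (outerRep F ρ₁ ρ₂ g x) =
      outerRep F ρ₂ ρ₁ g.swap (TensorProduct.comm F V₁ V₂ x) := by
  induction x using TensorProduct.induction_on with
  | zero => simp
  | tmul v₁ v₂ => rfl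
  | add x y hx hy => simp only [map_add, hx, hy]

theorem RepIso.outerRep_comm {ρV₁ : Representation F G₁ V₁} {ρV₂ : Representation F G₂ V₂}
    {ρW₁ : Representation F G₁ W₁} {ρW₂ : Representation F G₂ W₂}
    (h : RepIso F (outerRep F ρV₁ ρV₂) (outerRep F ρW₁ ρW₂)) :
    RepIso F (outerRep F ρV₂ ρV₁) (outerRep F ρW₂ ρW₁) := by
  obtain ⟨e, he⟩ := h
  refine ⟨TensorProduct.comm F V₂ V₁ ≪≫ₗ e ≪≫ₗ TensorProduct.comm F W₁ W₂, fun g x => ?_⟩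
  simp only [LinearEquiv.trans_apply, comm_outerRep, he]
  rfl

end OuterTensor

section Irreducible

variable {F : Type*} [Field F]

theorem IsIrreducibleRep.repIso_of_ne_zero {G : Type*} [Monoid G] {V W : Type*}
    [AddCommGroup V] [Module F V] [AddCommGroup W] [Module F W]
    {ρ : Representation F G V} {σ : Representation F G W}
    (hρ : IsIrreducibleRep F ρ) (hσ : IsIrreducibleRep F σ)
    (f : V →ₗ[F] W) (hf : ∀ g v, f (ρ g v) = σ g (f v)) (hf₀ : f ≠ 0) : RepIso F ρ σ := by
  have hker : LinearMap.ker f = ⊥ :=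
    (hρ.2 _ fun g v hv => by rw [LinearMap.mem_ker, hf, hv, map_zero]).resolve_right
      fun h => hf₀ (LinearMap.ker_eq_top.1 h)
  have hrange : LinearMap.range f = ⊤ :=
    (hσ.2 (LinearMap.range f) fun g _ ⟨v, hv⟩ => hv ▸ ⟨ρ g v, hf g v⟩).resolve_left
      fun h => hf₀ (LinearMap.range_eq_bot.1 h)
  exact ⟨.ofBijective f ⟨LinearMap.ker_eq_bot.1 hker, LinearMap.range_eq_top.1 hrange⟩, hf⟩

theorem RepIso.of_outerRep_left {G₁ G₂ : Type*} [Monoid G₁] [Monoid G₂]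
    {V₁ V₂ W₁ W₂ : Type*} [AddCommGroup V₁] [Module F V₁] [AddCommGroup V₂] [Module F V₂]
    [AddCommGroup W₁] [Module F W₁] [AddCommGroup W₂] [Module F W₂] [Nontrivial V₂]
    {ρV₁ : Representation F G₁ V₁} {ρV₂ : Representation F G₂ V₂}
    {ρW₁ : Representation F G₁ W₁} {ρW₂ : Representation F G₂ W₂}
    (hV₁ : IsIrreducibleRep F ρV₁) (hW₁ : IsIrreducibleRep F ρW₁)
    (h : RepIso F (outerRep F ρV₁ ρV₂) (outerRep F ρW₁ ρW₂)) : RepIso F ρV₁ ρW₁ := by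
  obtain ⟨e, he⟩ := h
  have := hV₁.1
  obtain ⟨v₁, hv₁⟩ := exists_ne (0 : V₁)
  obtain ⟨v₂, hv₂⟩ := exists_ne (0 : V₂)
  obtain ⟨φ, hφ⟩ := exists_rightSlice_ne_zero (e.map_ne_zero_iff.2 (tmul_ne_zero hv₁ hv₂))
  let f : V₁ →ₗ[F] W₁ := rightSlice φ ∘ₗ e.toLinearMap ∘ₗ (TensorProduct.mk F V₁ V₂).flip v₂
  have hf : ∀ g v, f (ρV₁ g v) = ρW₁ g (f v) := fun g v => by
    have hg := he (g, 1) (v ⊗ₜ v₂)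
    rw [outerRep_apply_mk_one, outerRep_apply_mk_one, LinearMap.rTensor_tmul] at hg
    simp only [f, LinearMap.comp_apply, LinearMap.flip_apply, TensorProduct.mk_apply,
      LinearEquiv.coe_coe, hg, rightSlice_rTensor]
  exact hV₁.repIso_of_ne_zero hW₁ f hf fun h => hφ (LinearMap.congr_fun h v₁)

end Irreducible

/-- Theorem 3.11(c): let `G = G₁ × G₂`, let `V₁, W₁` be irreducible `FG₁`-modules and
`V₂, W₂` irreducible `FG₂`-modules with `V₁ ⊗_F V₂ ≅ W₁ ⊗_F W₂` as `FG`-modules (outer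
tensor products).  Then `V₁ ≅ W₁` as `FG₁`-modules and `V₂ ≅ W₂` as `FG₂`-modules. -/
theorem outer_tensor_cancellation
    (F : Type*) [Field F] (G₁ G₂ : Type*) [Group G₁] [Group G₂]
    (V₁ : Type*) [AddCommGroup V₁] [Module F V₁] (ρV₁ : Representation F G₁ V₁)
    (W₁ : Type*) [AddCommGroup W₁] [Module F W₁] (ρW₁ : Representation F G₁ W₁)
    (V₂ : Type*) [AddCommGroup V₂] [Module F V₂] (ρV₂ : Representation F G₂ V₂)
    (W₂ : Type*) [AddCommGroup W₂] [Module F W₂] (ρW₂ : Representation F G₂ W₂)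
    (hV₁ : IsIrreducibleRep F ρV₁) (hW₁ : IsIrreducibleRep F ρW₁)
    (hV₂ : IsIrreducibleRep F ρV₂) (hW₂ : IsIrreducibleRep F ρW₂)
    (h : RepIso F (outerRep F ρV₁ ρV₂) (outerRep F ρW₁ ρW₂)) :
    RepIso F ρV₁ ρW₁ ∧ RepIso F ρV₂ ρW₂ := by
  have := hV₁.1
  have := hV₂.1
  exact ⟨.of_outerRep_left hV₁ hW₁ h, .of_outerRep_left hV₂ hW₂ h.outerRep_comm⟩
end

section
/- Let R be a simple ring (a nonzero ring whose only two-sided ideals are 0 and R) possessing a minimal left ideal. Then R is left artinian. -/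
/-- Lemma 4.1: a simple ring (a nonzero ring whose only two-sided ideals are `0` and the
whole ring) possessing a minimal left ideal is left artinian. -/
theorem simple_ring_with_minimal_left_ideal_is_artinian
    (R : Type*) [Ring R] [Nontrivial R]
    (hsimple : ∀ I : TwoSidedIdeal R, I = ⊥ ∨ I = ⊤)
    (hmin : ∃ I : Submodule R R, IsAtom I) :
    IsArtinianRing R := by
  obtain ⟨I, hI⟩ := hmin
  set S : Submodule R R := sSup {m : Submodule R R | IsAtom m} with hS
  -- S is closed under right multiplication
  have hmulr : ∀ (x r : R), x ∈ S → x * r ∈ S := by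
    intro x r hx
    have key : S.map (LinearMap.toSpanSingleton R R r) ≤ S := by
      rw [hS, sSup_eq_iSup', Submodule.map_iSup]
      apply iSup_le
      rintro ⟨m, hm⟩
      rcases eq_or_ne (m.map (LinearMap.toSpanSingleton R R r)) ⊥ with h | h
      · simp [h]
      · rw [← sSup_eq_iSup']
        apply le_sSup
        have hsm : IsSimpleModule R m := isSimpleModule_iff_isAtom.mpr hm
        rw [Set.mem_setOf_eq, ← isSimpleModule_iff_isAtom]
        have hrange : m.map (LinearMap.toSpanSingleton R R r)
            = LinearMap.range ((LinearMap.toSpanSingleton R R r).comp m.subtype) := by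
          rw [LinearMap.range_comp, Submodule.range_subtype]
        rcases LinearMap.injective_or_eq_zero
            ((LinearMap.toSpanSingleton R R r).comp m.subtype) with hinj | hzero
        · rw [hrange]
          exact IsSimpleModule.congr (LinearEquiv.ofInjective _ hinj).symm
        · exfalso
          apply h
          rw [hrange, hzero, LinearMap.range_zero]
    have : x * r ∈ S.map (LinearMap.toSpanSingleton R R r) :=
      ⟨x, hx, by simp [LinearMap.toSpanSingleton, smul_eq_mul]⟩
    exact key this
  -- form the two-sided ideal with carrier S
  let T : TwoSidedIdeal R := TwoSidedIdeal.mk' (S : Set R)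
    S.zero_mem (fun hx hy => S.add_mem hx hy) (fun hx => S.neg_mem hx)
    (fun {x y} hy => by simpa [smul_eq_mul] using S.smul_mem x hy)
    (fun {x y} hx => hmulr x y hx)
  have hmemT : ∀ z : R, z ∈ T ↔ z ∈ S := fun z => TwoSidedIdeal.mem_mk' _ _ _ _ _ _ z
  -- T is nonzero
  obtain ⟨a, haI, ha0⟩ := Submodule.exists_mem_ne_zero_of_ne_bot hI.1
  have hIS : I ≤ S := le_sSup hI
  have hTne : T ≠ ⊥ := by
    intro hbot
    have : a ∈ T := (hmemT a).mpr (hIS haI)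
    rw [hbot] at this
    exact ha0 (by simpa using this)
  have hTtop : T = ⊤ := (hsimple T).resolve_left hTne
  have hStop : S = ⊤ := by
    rw [Submodule.eq_top_iff']
    intro z
    have : z ∈ T := by rw [hTtop]; trivial
    exact (hmemT z).mp this
  have : IsSemisimpleModule R R := by
    apply IsSemisimpleModule.of_sSup_simples_eq_top
    simpa only [isSimpleModule_iff_isAtom] using hStop
  have : IsSemisimpleRing R := this
  infer_instance
end
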